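/- arXiv:2601.07057 — 2 statements merged into one kernel-verified Lean document; each statement's English description precedes it below -/
import Mathlib

section
/- In the commutator subalgebra A' of Z[Core(Z)] (the subring generated by all commutators uv - vu), every element E_a = e_a - e_0 with a divisible by 3 lies in A'; in particular E_a = [e_{a/3}, e_{2a/3}] for 3 | a. -/
/-- Product on the quandle ring ℤ[Core(ℤ)]: e_i · e_j = e_{2j-i}. -/
noncomputable def coreMul (u v : ℤ →₀ ℤ) : ℤ →₀ ℤ :=
  u.sum fun a α => v.sum fun b β => Finsupp.single (2 * b - a) (α * β)

/-- Basis element e_a. -/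
noncomputable def e (a : ℤ) : ℤ →₀ ℤ := Finsupp.single a 1

/-- E_a = e_a - e_0. -/
noncomputable def E (a : ℤ) : ℤ →₀ ℤ := e a - e 0

lemma coreMul_e (x y : ℤ) : coreMul (e x) (e y) = e (2 * y - x) := by
  unfold coreMul e
  rw [Finsupp.sum_single_index, Finsupp.sum_single_index, one_mul]
  · simp
  · rw [Finsupp.sum_single_index] <;> simp

/-- For 3 ∣ a, E_a = [e_{a/3}, e_{2a/3}], and hence E_a lies in the commutator
subalgebra of ℤ[Core(ℤ)] (in particular in the additive subgroup generated by
all commutators uv - vu). -/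
theorem stmt4 (a : ℤ) (h3 : (3 : ℤ) ∣ a) :
    E a = coreMul (e (a / 3)) (e (2 * a / 3)) - coreMul (e (2 * a / 3)) (e (a / 3)) ∧
    E a ∈ AddSubgroup.closure
      {w : ℤ →₀ ℤ | ∃ u v : ℤ →₀ ℤ, w = coreMul u v - coreMul v u} := by
  obtain ⟨k, rfl⟩ := h3
  have h1 : 3 * k / 3 = k := by omega
  have h2 : 2 * (3 * k) / 3 = 2 * k := by omega
  have key : E (3 * k) = coreMul (e (3 * k / 3)) (e (2 * (3 * k) / 3)) -
      coreMul (e (2 * (3 * k) / 3)) (e (3 * k / 3)) := by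
    rw [h1, h2, coreMul_e, coreMul_e, E]
    ring_nf
  refine ⟨key, ?_⟩
  rw [key]
  exact AddSubgroup.subset_closure ⟨_, _, rfl⟩
end

section
/- The integral quandle ring Z[R_4] of the dihedral quandle of order 4 contains no nonzero idempotent with augmentation value 0. -/
lemma zmod4_sum (f : ZMod 4 → ℤ) : ∑ x, f x = f 0 + f 1 + f 2 + f 3 := by
  rw [show (Finset.univ : Finset (ZMod 4)) = {0,1,2,3} by decide,
      Finset.sum_insert (by decide), Finset.sum_insert (by decide),
      Finset.sum_insert (by decide), Finset.sum_singleton]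
  ring

/-- Product on the quandle ring ℤ[R_4]: e_x · e_y = e_{2y-x}. -/
def qr (u v : ZMod 4 → ℤ) : ZMod 4 → ℤ :=
  fun z => ∑ x, ∑ y, if 2 * y - x = z then u x * v y else 0

/-- ℤ[R_4] has no nonzero idempotent with augmentation 0. -/
theorem stmt10 (u : ZMod 4 → ℤ) (hidem : qr u u = u) (haug : ∑ x, u x = 0) :
    u = 0 := by
  have h0 := congrFun hidem 0
  have h1 := congrFun hidem 1
  have h2 := congrFun hidem 2
  have h3 := congrFun hidem 3
  simp only [qr, zmod4_sum] at h0 h1 h2 h3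
  rw [zmod4_sum] at haug
  simp (config := { decide := true }) only [if_true, if_false, reduceIte] at h0 h1 h2 h3
  have e0 : u 0 = 0 := by nlinarith [h0, h2, haug, sq_nonneg (u 0 + u 2)]
  have e2 : u 2 = 0 := by nlinarith [h0, h2, haug, sq_nonneg (u 0 + u 2)]
  have e1 : u 1 = 0 := by nlinarith [h1, h3, haug, sq_nonneg (u 1 + u 3)]
  have e3 : u 3 = 0 := by nlinarith [h1, h3, haug, sq_nonneg (u 1 + u 3)]
  funext z
  have : z = 0 ∨ z = 1 ∨ z = 2 ∨ z = 3 := by revert z; decide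
  rcases this with rfl | rfl | rfl | rfl <;> simpa using ‹_›
end
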